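/- There exists a constant α > 0 such that for all constants γ > 0 and K > 0 there exists a constant C > 0 (depending only on γ and K) with the following property, for every real p > 1 and scalar Θ > 0: let {X_{i,j}}_{i ∈ [m], j ∈ [n]} be independent random variables taking values in [0, αΘ], let S_i := Σ_j X_{i,j}, and X̃_{i,j} := X_{i,j}/44. Suppose: (1) there exists a sequence v̄_1, …, v̄_m of reals with v̄_i ≥ (1/α)^p for all i, such that for each i either Σ_j min{1, ν_{Θ/v̄_i^{1/p}, p}(X̃_{i,j})} ≤ 10 or v̄_i = (1/α)^p, and Σ_i 1/v̄_i ≤ 5; (2) Σ_{i,j} E X_{i,j}^p ≤ (K·Θ)^p; (3) there exists a sequence ℓ̄_1, …, ℓ̄_m of integers in {1, …, m} such that Σ_j β_{ℓ̄_i}(X_{i,j}/Θ) ≤ γ for all i, and for each ℓ ∈ {1, …, m} at most ℓ of the indices i have ℓ̄_i = ℓ. Then E (Σ_i S_i^p)^{1/p} ≤ C·Θ. -/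

import Mathlib

open MeasureTheory ProbabilityTheory

/-- The L-function of Latała: `ν_{ε,p}(X) = (1/p) · ln E (1 + X/ε)^p`. -/
noncomputable def nu {Ω : Type*} [MeasurableSpace Ω] (μ : Measure Ω) (p ε : ℝ) (X : Ω → ℝ) : ℝ :=
  (1 / p) * Real.log (∫ ω, (1 + X ω / ε) ^ p ∂μ)

/-- The effective size `β_ℓ(X) = (1/ln ℓ) · ln E e^{X ln ℓ}` for `ℓ > 1`, and `β_1(X) = E X`. -/
noncomputable def effSize {Ω : Type*} [MeasurableSpace Ω] (μ : Measure Ω) (ℓ : ℝ) (X : Ω → ℝ) :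
    ℝ :=
  if 1 < ℓ then (1 / Real.log ℓ) * Real.log (∫ ω, Real.exp (X ω * Real.log ℓ) ∂μ)
  else ∫ ω, X ω ∂μ

/-!
Take `α = 1`, put `ε_i = Θ / v̄_i^{1/p}` and `ν_{ij} = ν_{ε_i,p}(X_{ij}/44)`, and call row `i`
heavy when `∑ⱼ min {1, ν_{ij}} > 10`. By (1) a heavy row has `v̄_i = 1`, so there are at most
five of them; their contribution to `‖S‖_p` is at most their `ℓ_1` norm, whose expectation is at
most `5γΘ` because the effective size dominates the mean (Jensen for `exp`). A light row splits
into at most ten entries with `ν_{ij} > 1`, controlled by the power-mean inequality and (2), and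
the rest, for which `∑ⱼ ν_{ij} ≤ 10`: there `∑ y ≤ ε ∏ (1 + y/ε)` and independence give
`E (∑ⱼ X_{ij})^p ≤ (44 e^{10} ε_i)^p = (44 e^{10} Θ)^p / v̄_i`, which sums by `∑ 1/v̄_i ≤ 5`.
Minkowski and Jensen for `t ↦ t^{1/p}` turn these `p`-th moment bounds into the claim.
-/

open Finset

theorem Finset.sum_le_prod_one_add {ι : Type*} (s : Finset ι) {f : ι → ℝ}
    (hf : ∀ i ∈ s, 0 ≤ f i) : ∑ i ∈ s, f i ≤ ∏ i ∈ s, (1 + f i) := by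
  classical
  induction s using Finset.induction_on with
  | empty => simp
  | insert a s ha ih =>
    rw [forall_mem_insert] at hf
    have hprod : 1 ≤ ∏ i ∈ s, (1 + f i) :=
      one_le_prod fun i hi => le_add_of_nonneg_right (hf.2 i hi)
    rw [sum_insert ha, prod_insert ha]
    nlinarith [ih hf.2, hf.1]

namespace Real

theorem sum_rpow_le_rpow_sum {ι : Type*} (s : Finset ι) {f : ι → ℝ} {p : ℝ} (hp : 1 ≤ p)
    (hf : ∀ i ∈ s, 0 ≤ f i) : ∑ i ∈ s, f i ^ p ≤ (∑ i ∈ s, f i) ^ p := by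
  classical
  induction s using Finset.induction_on with
  | empty => simp [zero_rpow (by linarith : p ≠ 0)]
  | insert a s ha ih =>
    rw [forall_mem_insert] at hf
    rw [sum_insert ha, sum_insert ha]
    exact (add_le_add le_rfl (ih hf.2)).trans
      (add_rpow_le_rpow_add hf.1 (sum_nonneg hf.2) hp)

theorem rpow_sum_rpow_le_sum {ι : Type*} (s : Finset ι) {f : ι → ℝ} {p : ℝ} (hp : 1 ≤ p)
    (hf : ∀ i ∈ s, 0 ≤ f i) : (∑ i ∈ s, f i ^ p) ^ (1 / p) ≤ ∑ i ∈ s, f i := by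
  have hp0 : 0 < p := by linarith
  calc (∑ i ∈ s, f i ^ p) ^ (1 / p) ≤ ((∑ i ∈ s, f i) ^ p) ^ (1 / p) :=
        rpow_le_rpow (sum_nonneg fun i hi => rpow_nonneg (hf i hi) p)
          (sum_rpow_le_rpow_sum s hp hf) (by positivity)
    _ = ∑ i ∈ s, f i := by
        rw [← rpow_mul (sum_nonneg hf), mul_one_div_cancel hp0.ne', rpow_one]

theorem rpow_sum_rpow_le_of_split {ι : Type*} (s : Finset ι) (P : ι → Prop) [DecidablePred P]
    {f a b : ι → ℝ} {p : ℝ} (hp : 1 ≤ p) (hf : ∀ i, 0 ≤ f i) (ha : ∀ i, 0 ≤ a i)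
    (hb : ∀ i, 0 ≤ b i) (hsplit : ∀ i, ¬ P i → f i = a i + b i) :
    (∑ i ∈ s, f i ^ p) ^ (1 / p) ≤ ∑ i ∈ s with P i, f i +
      (∑ i ∈ s with ¬ P i, a i ^ p) ^ (1 / p) + (∑ i ∈ s with ¬ P i, b i ^ p) ^ (1 / p) := by
  have hq : 0 ≤ 1 / p := by positivity
  have hq1 : 1 / p ≤ 1 := by rw [div_le_one (by linarith)]; exact hp
  rw [← sum_filter_add_sum_filter_not s P, add_assoc]
  have hfp : ∀ t : Finset ι, 0 ≤ ∑ i ∈ t, f i ^ p :=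
    fun t => sum_nonneg fun i _ => rpow_nonneg (hf i) p
  refine (rpow_add_le_add_rpow (hfp _) (hfp _) hq hq1).trans
    (add_le_add (rpow_sum_rpow_le_sum _ hp fun i _ => hf i) ?_)
  calc (∑ i ∈ s with ¬ P i, f i ^ p) ^ (1 / p)
      = (∑ i ∈ s with ¬ P i, (a i + b i) ^ p) ^ (1 / p) := by
        congr 1
        exact sum_congr rfl fun i hi => by rw [hsplit i (mem_filter.1 hi).2]
    _ ≤ _ := Lp_add_le_of_nonneg _ hp (fun i _ => ha i) (fun i _ => hb i)

end Real

theorem Finset.sum_min_one_eq {ι : Type*} (s : Finset ι) (g : ι → ℝ) :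
    ∑ i ∈ s, min 1 (g i) = #{i ∈ s | 1 < g i} + ∑ i ∈ s with ¬ 1 < g i, g i := by
  rw [← sum_filter_add_sum_filter_not s (1 < g ·), cast_card]
  congr 1
  · exact sum_congr rfl fun i hi => min_eq_left (mem_filter.1 hi).2.le
  · exact sum_congr rfl fun i hi => min_eq_right (not_lt.1 (mem_filter.1 hi).2)

theorem Finset.card_filter_one_lt_le_and_sum_le {ι : Type*} (s : Finset ι) {g : ι → ℝ} {N : ℝ}
    (hg : ∀ i ∈ s, 0 ≤ g i) (h : ∑ i ∈ s, min 1 (g i) ≤ N) :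
    (#{i ∈ s | 1 < g i} : ℝ) ≤ N ∧ ∑ i ∈ s with ¬ 1 < g i, g i ≤ N := by
  have hsum : 0 ≤ ∑ i ∈ s with ¬ 1 < g i, g i :=
    sum_nonneg fun i hi => hg i (mem_filter.1 hi).1
  have hcard : (0 : ℝ) ≤ #{i ∈ s | 1 < g i} := Nat.cast_nonneg _
  rw [sum_min_one_eq] at h
  constructor <;> linarith

theorem card_filter_le_sum_one_div {ι : Type*} (s : Finset ι) (P : ι → Prop) [DecidablePred P]
    {v : ι → ℝ} (hv : ∀ i ∈ s, 0 < v i) (h : ∀ i ∈ s, P i → v i = 1) :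
    (#{i ∈ s | P i} : ℝ) ≤ ∑ i ∈ s, 1 / v i := by
  rw [cast_card]
  calc ∑ i ∈ s with P i, (1 : ℝ) = ∑ i ∈ s with P i, 1 / v i :=
        sum_congr rfl fun i hi => by
          rw [h i (mem_filter.1 hi).1 (mem_filter.1 hi).2, div_one]
    _ ≤ ∑ i ∈ s, 1 / v i := sum_le_sum_of_subset_of_nonneg (filter_subset _ _) fun i hi _ =>
        (one_div_pos.2 (hv i hi)).le

section Probability

variable {Ω : Type*} [MeasurableSpace Ω] {μ : Measure Ω}

theorem exp_mul_nu {Z : Ω → ℝ} {p ε : ℝ} (hp : p ≠ 0)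
    (hpos : 0 < ∫ ω, (1 + Z ω / ε) ^ p ∂μ) :
    Real.exp (p * nu μ p ε Z) = ∫ ω, (1 + Z ω / ε) ^ p ∂μ := by
  rw [nu, ← mul_assoc, mul_one_div_cancel hp, one_mul, Real.exp_log hpos]

theorem ProbabilityTheory.iIndepFun.integral_finset_prod {κ : Type*} {Y : κ → Ω → ℝ}
    (hY : iIndepFun Y μ) (hm : ∀ j, AEStronglyMeasurable (Y j) μ) (s : Finset κ) :
    ∫ ω, ∏ j ∈ s, Y j ω ∂μ = ∏ j ∈ s, ∫ ω, Y j ω ∂μ := by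
  have hs : iIndepFun (fun j : s => Y j) μ := hY.precomp Subtype.val_injective
  have h := hs.integral_fun_prod_eq_prod_integral fun j => hm j
  rw [← prod_coe_sort s]
  simp_rw [← prod_coe_sort s (fun j => Y j _)]
  exact h

variable [IsProbabilityMeasure μ]

theorem integral_rpow_le_rpow_integral {f : Ω → ℝ} {q : ℝ} (hq0 : 0 ≤ q) (hq1 : q ≤ 1)
    (hf0 : ∀ ω, 0 ≤ f ω) (hf : Integrable f μ) (hfq : Integrable (fun ω => f ω ^ q) μ) :
    ∫ ω, f ω ^ q ∂μ ≤ (∫ ω, f ω ∂μ) ^ q :=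
  (Real.concaveOn_rpow hq0 hq1).le_map_integral (Real.continuous_rpow_const hq0).continuousOn
    isClosed_Ici (ae_of_all _ hf0) hf hfq

theorem integral_le_effSize {f : Ω → ℝ} (ℓ : ℝ) (hf : Integrable f μ)
    (hexp : Integrable (fun ω => Real.exp (f ω * Real.log ℓ)) μ) :
    ∫ ω, f ω ∂μ ≤ effSize μ ℓ f := by
  unfold effSize
  split_ifs with hℓ
  · have hL : 0 < Real.log ℓ := Real.log_pos hℓ
    have hJensen : Real.exp ((∫ ω, f ω ∂μ) * Real.log ℓ)
        ≤ ∫ ω, Real.exp (f ω * Real.log ℓ) ∂μ := by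
      rw [← integral_mul_const]
      exact convexOn_exp.map_integral_le Real.continuous_exp.continuousOn isClosed_univ
        (ae_of_all _ fun _ => Set.mem_univ _) (hf.mul_const _) hexp
    have hlog := (Real.le_log_iff_exp_le ((Real.exp_pos _).trans_le hJensen)).2 hJensen
    calc ∫ ω, f ω ∂μ = 1 / Real.log ℓ * ((∫ ω, f ω ∂μ) * Real.log ℓ) := by field_simp
      _ ≤ _ := by gcongr
  · exact le_rfl

theorem integrable_rpow_of_mem_Icc {f : Ω → ℝ} {B q : ℝ} (hq : 0 ≤ q) (hm : Measurable f)
    (hf : ∀ ω, f ω ∈ Set.Icc 0 B) : Integrable (fun ω => f ω ^ q) μ :=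
  Integrable.of_mem_Icc 0 (B ^ q) (by fun_prop) (ae_of_all _ fun ω =>
    ⟨Real.rpow_nonneg (hf ω).1 q, Real.rpow_le_rpow (hf ω).1 (hf ω).2 hq⟩)

theorem integrable_one_add_div_rpow {Z : Ω → ℝ} {B p ε : ℝ} (hm : Measurable Z)
    (hZ : ∀ ω, Z ω ∈ Set.Icc 0 B) (hp : 0 ≤ p) (hε : 0 < ε) :
    Integrable (fun ω => (1 + Z ω / ε) ^ p) μ :=
  integrable_rpow_of_mem_Icc (B := 1 + B / ε) hp (by fun_prop) fun ω =>
    ⟨by linarith [div_nonneg (hZ ω).1 hε.le], by gcongr; exact (hZ ω).2⟩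

theorem one_le_integral_one_add_div_rpow {Z : Ω → ℝ} {B p ε : ℝ} (hm : Measurable Z)
    (hZ : ∀ ω, Z ω ∈ Set.Icc 0 B) (hp : 0 ≤ p) (hε : 0 < ε) :
    1 ≤ ∫ ω, (1 + Z ω / ε) ^ p ∂μ := by
  simpa using integral_mono (integrable_const (μ := μ) 1) (integrable_one_add_div_rpow hm hZ hp hε)
    fun ω => Real.one_le_rpow (le_add_of_nonneg_right (div_nonneg (hZ ω).1 hε.le)) hp

theorem nu_nonneg {Z : Ω → ℝ} {B p ε : ℝ} (hm : Measurable Z) (hZ : ∀ ω, Z ω ∈ Set.Icc 0 B)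
    (hp : 0 ≤ p) (hε : 0 < ε) : 0 ≤ nu μ p ε Z :=
  mul_nonneg (by positivity)
    (Real.log_nonneg (one_le_integral_one_add_div_rpow hm hZ hp hε))

theorem integrable_rpow_sum_rpow {ι : Type*} {Z : ι → Ω → ℝ} {B p q : ℝ} (s : Finset ι)
    (hp : 0 ≤ p) (hq : 0 ≤ q) (hm : ∀ i, Measurable (Z i)) (hZ : ∀ i ω, Z i ω ∈ Set.Icc 0 B) :
    Integrable (fun ω => (∑ i ∈ s, Z i ω ^ p) ^ q) μ :=
  integrable_rpow_of_mem_Icc (B := ∑ i ∈ s, B ^ p) hq (by fun_prop) fun ω =>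
    ⟨sum_nonneg fun i _ => Real.rpow_nonneg (hZ i ω).1 p,
      sum_le_sum fun i _ => Real.rpow_le_rpow (hZ i ω).1 (hZ i ω).2 hp⟩

theorem integral_rpow_sum_rpow_le {ι : Type*} {Z : ι → Ω → ℝ} {B M p : ℝ} (s : Finset ι)
    (hp : 1 ≤ p) (hm : ∀ i, Measurable (Z i)) (hZ : ∀ i ω, Z i ω ∈ Set.Icc 0 B) (hM : 0 ≤ M)
    (h : ∑ i ∈ s, ∫ ω, Z i ω ^ p ∂μ ≤ M ^ p) :
    ∫ ω, (∑ i ∈ s, Z i ω ^ p) ^ (1 / p) ∂μ ≤ M := by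
  have hp0 : 0 < p := by linarith
  have hZp : ∀ i, Integrable (fun ω => Z i ω ^ p) μ :=
    fun i => integrable_rpow_of_mem_Icc hp0.le (hm i) (hZ i)
  have hsum : ∀ ω, 0 ≤ ∑ i ∈ s, Z i ω ^ p :=
    fun ω => sum_nonneg fun i _ => Real.rpow_nonneg (hZ i ω).1 p
  calc ∫ ω, (∑ i ∈ s, Z i ω ^ p) ^ (1 / p) ∂μ
      ≤ (∫ ω, ∑ i ∈ s, Z i ω ^ p ∂μ) ^ (1 / p) :=
        integral_rpow_le_rpow_integral (by positivity) (by rw [div_le_one hp0]; exact hp)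
          hsum (integrable_finsetSum s fun i _ => hZp i)
          (integrable_rpow_sum_rpow s hp0.le (by positivity) hm hZ)
    _ ≤ (M ^ p) ^ (1 / p) := by
        rw [integral_finsetSum s fun i _ => hZp i]
        exact Real.rpow_le_rpow
          (sum_nonneg fun i _ => integral_nonneg fun ω => Real.rpow_nonneg (hZ i ω).1 p) h
          (by positivity)
    _ = M := by rw [← Real.rpow_mul hM, mul_one_div_cancel hp0.ne', Real.rpow_one]

theorem integral_rpow_sum_le_card_rpow_mul {κ : Type*} {Y : κ → Ω → ℝ} {B p : ℝ} (s : Finset κ)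
    (hp : 1 ≤ p) (hm : ∀ j, Measurable (Y j)) (hY : ∀ j ω, Y j ω ∈ Set.Icc 0 B) :
    ∫ ω, (∑ j ∈ s, Y j ω) ^ p ∂μ ≤ (s.card : ℝ) ^ (p - 1) * ∑ j ∈ s, ∫ ω, Y j ω ^ p ∂μ := by
  have hYp : ∀ j, Integrable (fun ω => Y j ω ^ p) μ :=
    fun j => integrable_rpow_of_mem_Icc (by linarith) (hm j) (hY j)
  rw [← integral_finsetSum s fun j _ => hYp j, ← integral_const_mul]
  exact integral_mono_of_nonneg
    (ae_of_all _ fun ω => Real.rpow_nonneg (sum_nonneg fun j _ => (hY j ω).1) p)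
    ((integrable_finsetSum s fun j _ => hYp j).const_mul _)
    (ae_of_all _ fun ω => Real.rpow_sum_le_const_mul_sum_rpow_of_nonneg s hp fun j _ => (hY j ω).1)

theorem integral_rpow_sum_le_exp_nu {κ : Type*} {Y : κ → Ω → ℝ} {B p ε : ℝ} (s : Finset κ)
    (hind : iIndepFun Y μ) (hm : ∀ j, Measurable (Y j)) (hY : ∀ j ω, Y j ω ∈ Set.Icc 0 B)
    (hp : 0 < p) (hε : 0 < ε) :
    ∫ ω, (∑ j ∈ s, Y j ω) ^ p ∂μ ≤ ε ^ p * Real.exp (p * ∑ j ∈ s, nu μ p ε (Y j)) := by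
  set Z : κ → Ω → ℝ := fun j ω => (1 + Y j ω / ε) ^ p
  have hZ : ∀ j ω, Z j ω ∈ Set.Icc 1 ((1 + B / ε) ^ p) := fun j ω => by
    have h0 : 0 ≤ Y j ω / ε := div_nonneg (hY j ω).1 hε.le
    refine ⟨Real.one_le_rpow (by linarith) hp.le, Real.rpow_le_rpow (by linarith) ?_ hp.le⟩
    gcongr
    exact (hY j ω).2
  have hpoint : ∀ ω, (∑ j ∈ s, Y j ω) ^ p ≤ ε ^ p * ∏ j ∈ s, Z j ω := fun ω => by
    have hY0 : ∀ j ∈ s, 0 ≤ Y j ω / ε := fun j _ => div_nonneg (hY j ω).1 hε.le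
    have h := sum_le_prod_one_add s hY0
    rw [← sum_div, div_le_iff₀ hε] at h
    calc (∑ j ∈ s, Y j ω) ^ p ≤ ((∏ j ∈ s, (1 + Y j ω / ε)) * ε) ^ p :=
          Real.rpow_le_rpow (sum_nonneg fun j _ => (hY j ω).1) h hp.le
      _ = ε ^ p * ∏ j ∈ s, Z j ω := by
          have h1 : ∀ j ∈ s, 0 ≤ 1 + Y j ω / ε := fun j hj => by linarith [hY0 j hj]
          rw [Real.mul_rpow (prod_nonneg h1) hε.le, ← Real.finsetProd_rpow s _ h1, mul_comm]
  have hprod : Integrable (fun ω => ε ^ p * ∏ j ∈ s, Z j ω) μ :=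
    (Integrable.of_mem_Icc 0 (∏ j ∈ s, (1 + B / ε) ^ p) (by fun_prop) (ae_of_all _ fun ω =>
      ⟨prod_nonneg fun j _ => zero_le_one.trans (hZ j ω).1,
        prod_le_prod (fun j _ => zero_le_one.trans (hZ j ω).1)
          fun j _ => (hZ j ω).2⟩)).const_mul _
  have hindZ : iIndepFun Z μ := hind.comp (fun _ t => (1 + t / ε) ^ p) fun _ => by fun_prop
  calc ∫ ω, (∑ j ∈ s, Y j ω) ^ p ∂μ ≤ ∫ ω, ε ^ p * ∏ j ∈ s, Z j ω ∂μ :=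
        integral_mono_of_nonneg
          (ae_of_all _ fun ω => Real.rpow_nonneg (sum_nonneg fun j _ => (hY j ω).1) p)
          hprod (ae_of_all _ hpoint)
    _ = ε ^ p * ∏ j ∈ s, ∫ ω, Z j ω ∂μ := by
        rw [integral_const_mul, hindZ.integral_finset_prod fun j => by fun_prop]
    _ = ε ^ p * Real.exp (p * ∑ j ∈ s, nu μ p ε (Y j)) := by
        rw [mul_sum, Real.exp_sum]
        congr 1
        exact prod_congr rfl fun j _ =>
          (exp_mul_nu hp.ne' (one_pos.trans_le
            (one_le_integral_one_add_div_rpow (hm j) (hY j) hp.le hε))).symm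

theorem integral_rpow_sum_le_of_sum_nu_le {κ : Type*} {Y : κ → Ω → ℝ} {B c p ε N : ℝ}
    (s : Finset κ) (hind : iIndepFun Y μ) (hm : ∀ j, Measurable (Y j))
    (hY : ∀ j ω, Y j ω ∈ Set.Icc 0 B) (hc : 0 < c) (hp : 0 < p) (hε : 0 < ε)
    (hN : ∑ j ∈ s, nu μ p ε (fun ω => Y j ω / c) ≤ N) :
    ∫ ω, (∑ j ∈ s, Y j ω) ^ p ∂μ ≤ (c * Real.exp N * ε) ^ p := by
  have hYc : ∀ j ω, Y j ω / c ∈ Set.Icc 0 (B / c) := fun j ω =>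
    ⟨div_nonneg (hY j ω).1 hc.le, div_le_div_of_nonneg_right (hY j ω).2 hc.le⟩
  have hscale : ∀ ω, (∑ j ∈ s, Y j ω) ^ p = c ^ p * (∑ j ∈ s, Y j ω / c) ^ p := fun ω => by
    rw [← sum_div, Real.div_rpow (sum_nonneg fun j _ => (hY j ω).1) hc.le,
      mul_div_cancel₀ _ (Real.rpow_pos_of_pos hc p).ne']
  calc ∫ ω, (∑ j ∈ s, Y j ω) ^ p ∂μ = c ^ p * ∫ ω, (∑ j ∈ s, Y j ω / c) ^ p ∂μ := by
        simp_rw [hscale, integral_const_mul]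
    _ ≤ c ^ p * (ε ^ p * Real.exp (p * N)) := by
        gcongr
        exact (integral_rpow_sum_le_exp_nu s (hind.comp (fun _ t => t / c) fun _ => by fun_prop)
          (fun j => (hm j).div_const c) hYc hp hε).trans (by gcongr; exact hN)
    _ = (c * Real.exp N * ε) ^ p := by
        rw [Real.mul_rpow (by positivity) hε.le, Real.mul_rpow hc.le (Real.exp_pos N).le,
          ← Real.exp_mul, mul_comm N p]
        ring

theorem integral_sum_le_of_sum_effSize_le {κ : Type*} {Y : κ → Ω → ℝ} {Θ γ ℓ : ℝ}
    (s : Finset κ) (hΘ : 0 < Θ) (hm : ∀ j, Measurable (Y j)) (hY : ∀ j ω, Y j ω ∈ Set.Icc 0 Θ)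
    (h : ∑ j ∈ s, effSize μ ℓ (fun ω => Y j ω / Θ) ≤ γ) :
    ∫ ω, ∑ j ∈ s, Y j ω ∂μ ≤ γ * Θ := by
  have hYΘ : ∀ j ω, Y j ω / Θ ∈ Set.Icc 0 1 := fun j ω =>
    ⟨div_nonneg (hY j ω).1 hΘ.le, (div_le_one hΘ).2 (hY j ω).2⟩
  have hexp : ∀ j, Integrable (fun ω => Real.exp (Y j ω / Θ * Real.log ℓ)) μ := fun j =>
    Integrable.of_mem_Icc 0 (Real.exp |Real.log ℓ|) (by fun_prop) (ae_of_all _ fun ω =>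
      ⟨(Real.exp_pos _).le, Real.exp_le_exp.2 (by
        nlinarith [(hYΘ j ω).1, (hYΘ j ω).2, le_abs_self (Real.log ℓ), abs_nonneg (Real.log ℓ)])⟩)
  have hmean : ∀ j, ∫ ω, Y j ω / Θ ∂μ ≤ effSize μ ℓ (fun ω => Y j ω / Θ) := fun j =>
    integral_le_effSize ℓ (Integrable.of_mem_Icc 0 1 (by fun_prop) (ae_of_all _ (hYΘ j))) (hexp j)
  have hint : ∀ j, Integrable (Y j) μ := fun j =>
    Integrable.of_mem_Icc 0 Θ (hm j).aemeasurable (ae_of_all _ (hY j))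
  calc ∫ ω, ∑ j ∈ s, Y j ω ∂μ = (∑ j ∈ s, ∫ ω, Y j ω / Θ ∂μ) * Θ := by
        rw [integral_finsetSum s fun j _ => hint j, sum_mul]
        exact sum_congr rfl fun j _ => by rw [integral_div, div_mul_cancel₀ _ hΘ.ne']
    _ ≤ γ * Θ := by gcongr; exact (sum_le_sum fun j _ => hmean j).trans h

end Probability

theorem sum_mem_Icc_card_mul {Ω ι κ : Type*} [Fintype κ] {X : ι × κ → Ω → ℝ} {Θ : ℝ}
    (hX : ∀ ij ω, X ij ω ∈ Set.Icc 0 Θ) (i : ι) (F : Finset κ) (ω : Ω) :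
    ∑ j ∈ F, X (i, j) ω ∈ Set.Icc 0 (Fintype.card κ * Θ) := by
  refine ⟨sum_nonneg fun j _ => (hX _ ω).1, ?_⟩
  calc ∑ j ∈ F, X (i, j) ω ≤ ∑ j : κ, X (i, j) ω :=
        sum_le_sum_of_subset_of_nonneg (subset_univ F) fun j _ _ => (hX _ ω).1
    _ ≤ ∑ _j : κ, Θ := sum_le_sum fun j _ => (hX _ ω).2
    _ = Fintype.card κ * Θ := by simp

section RowSums

variable {Ω ι κ : Type*} [MeasurableSpace Ω] {μ : Measure Ω} [IsProbabilityMeasure μ]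
  {X : ι × κ → Ω → ℝ} {p Θ : ℝ}

theorem integral_sum_rowSum_le_card_mul [Fintype κ] (s : Finset ι) {M : ℝ}
    (hm : ∀ ij, Measurable (X ij)) (hX : ∀ ij ω, X ij ω ∈ Set.Icc 0 Θ)
    (hmean : ∀ i ∈ s, ∫ ω, ∑ j, X (i, j) ω ∂μ ≤ M) :
    ∫ ω, ∑ i ∈ s, ∑ j, X (i, j) ω ∂μ ≤ #s * M := by
  rw [integral_finsetSum s fun i _ => Integrable.of_mem_Icc _ _ (by fun_prop)
    (ae_of_all _ (sum_mem_Icc_card_mul hX i univ))]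
  simpa using sum_le_sum hmean

theorem sum_integral_rpow_rowSum_le [Fintype ι] [Fintype κ] (s : Finset ι) (F : ι → Finset κ)
    {N : ℕ} (hF : ∀ i ∈ s, (F i).card ≤ N) (hp : 1 ≤ p) (hm : ∀ ij, Measurable (X ij))
    (hX : ∀ ij ω, X ij ω ∈ Set.Icc 0 Θ) :
    ∑ i ∈ s, ∫ ω, (∑ j ∈ F i, X (i, j) ω) ^ p ∂μ
      ≤ (N : ℝ) ^ (p - 1) * ∑ ij, ∫ ω, X ij ω ^ p ∂μ := by
  have hXp : ∀ ij, 0 ≤ ∫ ω, X ij ω ^ p ∂μ :=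
    fun ij => integral_nonneg fun ω => Real.rpow_nonneg (hX ij ω).1 p
  calc ∑ i ∈ s, ∫ ω, (∑ j ∈ F i, X (i, j) ω) ^ p ∂μ
      ≤ ∑ i ∈ s, (N : ℝ) ^ (p - 1) * ∑ j, ∫ ω, X (i, j) ω ^ p ∂μ := by
        refine sum_le_sum fun i hi => (integral_rpow_sum_le_card_rpow_mul (F i) hp
          (fun j => hm (i, j)) fun j => hX (i, j)).trans ?_
        exact mul_le_mul
          (Real.rpow_le_rpow (Nat.cast_nonneg _) (by exact_mod_cast hF i hi) (by linarith))
          (sum_le_sum_of_subset_of_nonneg (subset_univ _) fun j _ _ => hXp _)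
          (sum_nonneg fun j _ => hXp _) (by positivity)
    _ ≤ ∑ i, (N : ℝ) ^ (p - 1) * ∑ j, ∫ ω, X (i, j) ω ^ p ∂μ :=
        sum_le_sum_of_subset_of_nonneg (subset_univ s) fun i _ _ =>
          mul_nonneg (by positivity) (sum_nonneg fun j _ => hXp _)
    _ = (N : ℝ) ^ (p - 1) * ∑ ij, ∫ ω, X ij ω ^ p ∂μ := by
        rw [← mul_sum, Fintype.sum_prod_type]

theorem sum_integral_rpow_rowSum_le_of_nu [Fintype κ] (s : Finset ι) (F : ι → Finset κ)
    {v : ι → ℝ} {c N : ℝ} (hp : 0 < p) (hΘ : 0 < Θ) (hc : 0 < c) (hind : iIndepFun X μ)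
    (hm : ∀ ij, Measurable (X ij)) (hX : ∀ ij ω, X ij ω ∈ Set.Icc 0 Θ) (hv : ∀ i, 0 < v i)
    (hν : ∀ i ∈ s, ∑ j ∈ F i, nu μ p (Θ / v i ^ (1 / p)) (fun ω => X (i, j) ω / c) ≤ N) :
    ∑ i ∈ s, ∫ ω, (∑ j ∈ F i, X (i, j) ω) ^ p ∂μ
      ≤ (c * Real.exp N * Θ) ^ p * ∑ i ∈ s, 1 / v i := by
  rw [mul_sum]
  refine sum_le_sum fun i hi => ?_
  have hε : 0 < Θ / v i ^ (1 / p) := div_pos hΘ (Real.rpow_pos_of_pos (hv i) _)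
  refine (integral_rpow_sum_le_of_sum_nu_le (F i) (hind.precomp (Prod.mk_right_injective i))
    (fun j => hm (i, j)) (fun j => hX (i, j)) hc hp hε (hν i hi)).trans (le_of_eq ?_)
  rw [← mul_div_assoc, Real.div_rpow (by positivity) (Real.rpow_nonneg (hv i).le _), one_div p,
    Real.rpow_inv_rpow (hv i).le hp.ne', mul_one_div]

theorem integral_rpow_sum_rowSum_le_of_split [Fintype ι] [Fintype κ] (P : ι → Prop)
    [DecidablePred P] (Q : ι → κ → Prop) [∀ i, DecidablePred (Q i)] {A B M : ℝ} (hp : 1 ≤ p)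
    (hm : ∀ ij, Measurable (X ij)) (hX : ∀ ij ω, X ij ω ∈ Set.Icc 0 Θ) (hA : 0 ≤ A) (hB : 0 ≤ B)
    (hP : ∫ ω, ∑ i with P i, ∑ j, X (i, j) ω ∂μ ≤ M)
    (hQ : ∑ i with ¬ P i, ∫ ω, (∑ j with Q i j, X (i, j) ω) ^ p ∂μ ≤ A ^ p)
    (hnQ : ∑ i with ¬ P i, ∫ ω, (∑ j with ¬ Q i j, X (i, j) ω) ^ p ∂μ ≤ B ^ p) :
    ∫ ω, (∑ i, (∑ j, X (i, j) ω) ^ p) ^ (1 / p) ∂μ ≤ M + A + B := by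
  have hrow := sum_mem_Icc_card_mul hX
  have hp0 : 0 ≤ p := by linarith
  have hintP : Integrable (fun ω => ∑ i with P i, ∑ j, X (i, j) ω) μ :=
    integrable_finsetSum _ fun i _ =>
      Integrable.of_mem_Icc _ _ (by fun_prop) (ae_of_all _ (hrow i univ))
  have hintQ := integrable_rpow_sum_rpow (μ := μ) {i | ¬ P i} hp0 (by positivity : 0 ≤ 1 / p)
    (fun i => by fun_prop) fun i => hrow i {j | Q i j}
  have hintnQ := integrable_rpow_sum_rpow (μ := μ) {i | ¬ P i} hp0 (by positivity : 0 ≤ 1 / p)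
    (fun i => by fun_prop) fun i => hrow i {j | ¬ Q i j}
  calc ∫ ω, (∑ i, (∑ j, X (i, j) ω) ^ p) ^ (1 / p) ∂μ
      ≤ ∫ ω, (∑ i with P i, ∑ j, X (i, j) ω
          + (∑ i with ¬ P i, (∑ j with Q i j, X (i, j) ω) ^ p) ^ (1 / p)
          + (∑ i with ¬ P i, (∑ j with ¬ Q i j, X (i, j) ω) ^ p) ^ (1 / p)) ∂μ :=
        integral_mono_of_nonneg
          (ae_of_all _ fun ω => Real.rpow_nonneg
            (sum_nonneg fun i _ => Real.rpow_nonneg (hrow i _ ω).1 p) _)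
          ((hintP.add hintQ).add hintnQ)
          (ae_of_all _ fun ω => Real.rpow_sum_rpow_le_of_split _ P hp (fun i => (hrow i _ ω).1)
            (fun i => (hrow i _ ω).1) (fun i => (hrow i _ ω).1)
            fun i _ => (sum_filter_add_sum_filter_not _ _ _).symm)
    _ ≤ M + A + B := by
        have hintPQ : Integrable (fun ω => ∑ i with P i, ∑ j, X (i, j) ω
            + (∑ i with ¬ P i, (∑ j with Q i j, X (i, j) ω) ^ p) ^ (1 / p)) μ := hintP.add hintQ
        rw [integral_add hintPQ hintnQ, integral_add hintP hintQ]
        gcongr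
        · exact integral_rpow_sum_rpow_le _ hp (fun i => by fun_prop) (fun i => hrow i _) hA hQ
        · exact integral_rpow_sum_rpow_le _ hp (fun i => by fun_prop) (fun i => hrow i _) hB hnQ

theorem integral_rpow_sum_rowSum_le [Fintype ι] [Fintype κ] (hp : 1 < p) (hΘ : 0 < Θ)
    (hm : ∀ ij, Measurable (X ij)) (hX : ∀ ij ω, X ij ω ∈ Set.Icc 0 Θ) (hind : iIndepFun X μ)
    {v : ι → ℝ} (hv1 : ∀ i, 1 ≤ v i)
    (hvν : ∀ i, ∑ j, min 1 (nu μ p (Θ / v i ^ (1 / p)) (fun ω => X (i, j) ω / 44)) ≤ 10 ∨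
      v i = 1)
    (hv5 : ∑ i, 1 / v i ≤ 5) {L M : ℝ} (hL : 0 ≤ L) (hXp : ∑ ij, ∫ ω, X ij ω ^ p ∂μ ≤ L ^ p)
    (hM : 0 ≤ M) (hmean : ∀ i, ∫ ω, ∑ j, X (i, j) ω ∂μ ≤ M) :
    ∫ ω, (∑ i, (∑ j, X (i, j) ω) ^ p) ^ (1 / p) ∂μ
      ≤ 5 * M + 10 * L + 220 * Real.exp 10 * Θ := by
  classical
  set ν : ι → κ → ℝ := fun i j => nu μ p (Θ / v i ^ (1 / p)) (fun ω => X (i, j) ω / 44)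
  have hvpos : ∀ i, 0 < v i := fun i => one_pos.trans_le (hv1 i)
  have hν0 : ∀ i j, 0 ≤ ν i j := fun i j =>
    nu_nonneg (B := Θ / 44) ((hm (i, j)).div_const 44)
      (fun ω => ⟨div_nonneg (hX _ ω).1 (by norm_num),
        div_le_div_of_nonneg_right (hX _ ω).2 (by norm_num)⟩) (by linarith)
      (div_pos hΘ (Real.rpow_pos_of_pos (hvpos i) _))
  have hlight : ∀ i ∈ ({i | ¬ 10 < ∑ j, min 1 (ν i j)} : Finset ι),
      (#{j | 1 < ν i j} : ℝ) ≤ 10 ∧ ∑ j with ¬ 1 < ν i j, ν i j ≤ 10 := fun i hi =>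
    card_filter_one_lt_le_and_sum_le _ (fun j _ => hν0 i j) (not_lt.1 (mem_filter.1 hi).2)
  refine integral_rpow_sum_rowSum_le_of_split (fun i => 10 < ∑ j, min 1 (ν i j))
    (fun i j => 1 < ν i j) hp.le hm hX (by positivity) (by positivity) ?_ ?_ ?_
  · have hcard : (#{i | 10 < ∑ j, min 1 (ν i j)} : ℝ) ≤ 5 :=
      (card_filter_le_sum_one_div _ _ (fun i _ => hvpos i)
        fun i _ hi => (hvν i).resolve_left (not_le.2 hi)).trans hv5
    exact (integral_sum_rowSum_le_card_mul _ hm hX fun i _ => hmean i).trans (by gcongr)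
  · calc _ ≤ ((10 : ℕ) : ℝ) ^ (p - 1) * ∑ ij, ∫ ω, X ij ω ^ p ∂μ :=
          sum_integral_rpow_rowSum_le _ _ (fun i hi => by exact_mod_cast (hlight i hi).1) hp.le
            hm hX
      _ ≤ 10 ^ p * L ^ p := by
          push_cast
          exact mul_le_mul (Real.rpow_le_rpow_of_exponent_le (by norm_num) (by linarith)) hXp
            (sum_nonneg fun ij _ => integral_nonneg fun ω => Real.rpow_nonneg (hX ij ω).1 p)
            (by positivity)
      _ = (10 * L) ^ p := (Real.mul_rpow (by norm_num) hL).symm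
  · calc _ ≤ (44 * Real.exp 10 * Θ) ^ p * ∑ i with ¬ 10 < ∑ j, min 1 (ν i j), 1 / v i :=
          sum_integral_rpow_rowSum_le_of_nu _ _ (by linarith) hΘ (by norm_num) hind hm hX hvpos
            fun i hi => (hlight i hi).2
      _ ≤ (44 * Real.exp 10 * Θ) ^ p * 5 ^ p := by
          gcongr
          exact ((sum_le_sum_of_subset_of_nonneg (subset_univ _) fun i _ _ =>
            (one_div_pos.2 (hvpos i)).le).trans hv5).trans
            (Real.self_le_rpow_of_one_le (by norm_num) hp.le)
      _ = (220 * Real.exp 10 * Θ) ^ p := by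
          rw [← Real.mul_rpow (by positivity) (by norm_num)]
          ring_nf

end RowSums

theorem stmt_8 : ∃ α : ℝ, 0 < α ∧
    ∀ (γ K : ℝ), 0 < γ → 0 < K → ∃ C : ℝ, 0 < C ∧
    ∀ (p : ℝ), 1 < p → ∀ (Θ : ℝ), 0 < Θ →
    ∀ (Ω : Type*) (_ : MeasurableSpace Ω) (μ : Measure Ω), IsProbabilityMeasure μ →
    ∀ (m n : ℕ) (X : Fin m × Fin n → Ω → ℝ),
      (∀ ij, Measurable (X ij)) → (∀ ij ω, X ij ω ∈ Set.Icc 0 (α * Θ)) →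
      iIndepFun X μ →
      -- (1) ℓ_p control
      (∃ v : Fin m → ℝ, (∀ i, (1 / α) ^ p ≤ v i) ∧
        (∀ i, (∑ j, min 1 (nu μ p (Θ / v i ^ (1 / p)) (fun ω => X (i, j) ω / 44))) ≤ 10 ∨
          v i = (1 / α) ^ p) ∧
        ∑ i, 1 / v i ≤ 5) →
      -- (2) coarse control
      (∑ ij : Fin m × Fin n, ∫ ω, X ij ω ^ p ∂μ ≤ (K * Θ) ^ p) →
      -- (3) ℓ_∞ control
      (∃ ℓbar : Fin m → ℕ, (∀ i, ℓbar i ∈ Finset.Icc 1 m) ∧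
        (∀ i, ∑ j, effSize μ (ℓbar i : ℝ) (fun ω => X (i, j) ω / Θ) ≤ γ) ∧
        (∀ l ∈ Finset.Icc 1 m, (Finset.univ.filter fun i => ℓbar i = l).card ≤ l)) →
      ∫ ω, (∑ i, (∑ j, X (i, j) ω) ^ p) ^ (1 / p) ∂μ ≤ C * Θ := by
  refine ⟨1, one_pos, fun γ K hγ hK => ⟨5 * γ + 10 * K + 220 * Real.exp 10, by positivity, ?_⟩⟩
  rintro p hp Θ hΘ Ω _ μ _ m n X hm hX hind ⟨v, hv1, hvν, hv5⟩ hXp ⟨ℓ, -, hℓ, -⟩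
  simp only [div_one, Real.one_rpow, one_mul] at hv1 hvν hX
  calc _ ≤ 5 * (γ * Θ) + 10 * (K * Θ) + 220 * Real.exp 10 * Θ :=
        integral_rpow_sum_rowSum_le hp hΘ hm hX hind hv1 hvν hv5 (by positivity) hXp
          (by positivity) fun i => integral_sum_le_of_sum_effSize_le _ hΘ (fun j => hm (i, j))
            (fun j => hX (i, j)) (hℓ i)
    _ = _ := by ring
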